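/- arXiv:1701.06040 — 7 statements merged into one kernel-verified Lean document; each statement's English description precedes it below -/
import Mathlib

section
/- Let K be a field and f, g ∈ K[x] polynomials with g nonconstant, and let β be a root of g in an algebraic closure of K. Then g ∘ f is irreducible over K if and only if g is irreducible over K and f - β is irreducible over K(β). -/
open Polynomial IntermediateField Module

private lemma transfer_irred {K : Type*} [Field K] {E₁ E₂ : Type*} [Field E₁] [Field E₂]
    [Algebra K E₁] [Algebra K E₂] {x₁ : E₁} {x₂ : E₂}
    (h₁ : IsIntegral K x₁) (h₂ : IsIntegral K x₂)
    (hm : minpoly K x₁ = minpoly K x₂) (f : K[X])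
    (h : Irreducible (f.map (algebraMap K K⟮x₁⟯) - C (AdjoinSimple.gen K x₁))) :
    Irreducible (f.map (algebraMap K K⟮x₂⟯) - C (AdjoinSimple.gen K x₂)) := by
  let pb₁ := adjoin.powerBasis h₁
  let pb₂ := adjoin.powerBasis h₂
  have hmin : minpoly K pb₁.gen = minpoly K pb₂.gen := by
    rw [adjoin.powerBasis_gen, adjoin.powerBasis_gen, minpoly_gen, minpoly_gen, hm]
  let e := pb₁.equivOfMinpoly pb₂ hmin
  have key : (f.map (algebraMap K K⟮x₁⟯) - C (AdjoinSimple.gen K x₁)).map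
        (e : K⟮x₁⟯ →+* K⟮x₂⟯)
      = f.map (algebraMap K K⟮x₂⟯) - C (AdjoinSimple.gen K x₂) := by
    rw [Polynomial.map_sub, Polynomial.map_map, map_C]
    congr 1
    · congr 1
      exact e.toAlgHom.comp_algebraMap
    · congr 1
      exact pb₁.equivOfMinpoly_gen pb₂ hmin
  rw [← key]
  exact h.map (Polynomial.mapEquiv (e : K⟮x₁⟯ ≃+* K⟮x₂⟯))

set_option synthInstance.maxHeartbeats 1000000
set_option maxHeartbeats 4000000

/-- **Capelli's Lemma.** Let `K` be a field, `f g ∈ K[x]` with `g` nonconstant, and let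
`β` be a root of `g` in an algebraic closure of `K`. Then `g ∘ f` is irreducible over `K`
iff `g` is irreducible over `K` and `f - β` is irreducible over `K(β)`. -/
theorem capelli (K : Type*) [Field K] (f g : K[X]) (hg : g.natDegree ≠ 0)
    (β : AlgebraicClosure K) (hβ : aeval β g = 0) :
    Irreducible (g.comp f) ↔
      Irreducible g ∧
        Irreducible (f.map (algebraMap K K⟮β⟯) - C (AdjoinSimple.gen K β)) := by
  have hg0 : g ≠ 0 := fun h => hg (h ▸ natDegree_zero)
  have hβint : IsIntegral K β := Algebra.IsIntegral.isIntegral β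
  have hgenβ : aeval (AdjoinSimple.gen K β) g = 0 := by
    apply (algebraMap K⟮β⟯ (AlgebraicClosure K)).injective
    rw [map_zero, ← aeval_algebraMap_apply, AdjoinSimple.algebraMap_gen, hβ]
  haveI : FiniteDimensional K K⟮β⟯ := adjoin.finiteDimensional hβint
  constructor
  · intro H
    have hf0 : f.natDegree ≠ 0 := by
      intro e
      rw [eq_C_of_natDegree_eq_zero e, comp_C] at H
      exact not_irreducible_C _ H
    have hgirr : Irreducible g := by
      refine ⟨fun hu => hg (natDegree_eq_zero_of_isUnit hu), fun a b hab => ?_⟩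
      have hab' : g.comp f = a.comp f * b.comp f := by rw [hab, mul_comp]
      have ha0 : a ≠ 0 := fun h => hg0 (by simp [hab, h])
      have hb0 : b ≠ 0 := fun h => hg0 (by simp [hab, h])
      rcases H.isUnit_or_isUnit hab' with hu | hu
      · left
        have := natDegree_eq_zero_of_isUnit hu
        rw [natDegree_comp] at this
        have ha : a.natDegree = 0 := by
          rcases Nat.mul_eq_zero.mp this with h' | h' <;> [exact h'; exact absurd h' hf0]
        rw [eq_C_of_natDegree_eq_zero ha, isUnit_C]
        exact Ne.isUnit (fun h => ha0 (by rw [eq_C_of_natDegree_eq_zero ha, h, map_zero]))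
      · right
        have := natDegree_eq_zero_of_isUnit hu
        rw [natDegree_comp] at this
        have hb : b.natDegree = 0 := by
          rcases Nat.mul_eq_zero.mp this with h' | h' <;> [exact h'; exact absurd h' hf0]
        rw [eq_C_of_natDegree_eq_zero hb, isUnit_C]
        exact Ne.isUnit (fun h => hb0 (by rw [eq_C_of_natDegree_eq_zero hb, h, map_zero]))
    refine ⟨hgirr, ?_⟩
    set h : K⟮β⟯[X] := f.map (algebraMap K K⟮β⟯) - C (AdjoinSimple.gen K β) with hh
    have hdeg : h.natDegree = f.natDegree := by rw [hh, natDegree_sub_C, natDegree_map]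
    have hne : h ≠ 0 := fun h0 => hf0 (by rw [← hdeg, h0, natDegree_zero])
    have hnu : ¬ IsUnit h := fun hu => hf0 (by rw [← hdeg, natDegree_eq_zero_of_isUnit hu])
    obtain ⟨p, hpirr, hpdvd⟩ := WfDvdMonoid.exists_irreducible_factor hnu hne
    haveI := Fact.mk hpirr
    let L := AdjoinRoot p
    haveI : FiniteDimensional K⟮β⟯ L := (AdjoinRoot.powerBasis hpirr.ne_zero).finite
    haveI : FiniteDimensional K L := FiniteDimensional.trans K K⟮β⟯ L
    set r : L := AdjoinRoot.root p with hr
    have hph : aeval r h = 0 :=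
      aeval_eq_zero_of_dvd_aeval_eq_zero hpdvd (AdjoinRoot.eval₂_root p)
    have hfr : aeval r f = algebraMap K⟮β⟯ L (AdjoinSimple.gen K β) := by
      have : aeval r (f.map (algebraMap K K⟮β⟯)) = algebraMap K⟮β⟯ L (AdjoinSimple.gen K β) := by
        have := hph
        rw [hh, map_sub, aeval_C, sub_eq_zero] at this
        exact this
      rwa [aeval_map_algebraMap] at this
    have hgcomp : aeval r (g.comp f) = 0 := by
      rw [aeval_comp, hfr, aeval_algebraMap_apply, hgenβ, map_zero]
    have hminr := minpoly.eq_of_irreducible H hgcomp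
    have hlc : (g.comp f).leadingCoeff⁻¹ ≠ 0 := inv_ne_zero (leadingCoeff_ne_zero.mpr H.ne_zero)
    have hfinr : finrank K K⟮r⟯ = g.natDegree * f.natDegree := by
      rw [adjoin.finrank (IsIntegral.of_finite K r), ← hminr, natDegree_mul_C hlc, natDegree_comp]
    have hfinL : finrank K L = g.natDegree * p.natDegree := by
      have h1 : finrank K K⟮β⟯ = g.natDegree := by
        rw [adjoin.finrank hβint, ← minpoly.eq_of_irreducible hgirr hβ,
          natDegree_mul_C (inv_ne_zero (leadingCoeff_ne_zero.mpr hg0))]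
      have h2 : finrank K⟮β⟯ L = p.natDegree := by
        rw [(AdjoinRoot.powerBasis hpirr.ne_zero).finrank, AdjoinRoot.powerBasis_dim]
      rw [← h1, ← h2, Module.finrank_mul_finrank]
    have hle : finrank K K⟮r⟯ ≤ finrank K L :=
      Submodule.finrank_le (Subalgebra.toSubmodule K⟮r⟯.toSubalgebra)
    rw [hfinr, hfinL] at hle
    have hfp : f.natDegree ≤ p.natDegree := Nat.le_of_mul_le_mul_left hle (Nat.pos_of_ne_zero hg)
    have hle2 : h.natDegree ≤ p.natDegree := hdeg ▸ hfp
    exact ((associated_of_dvd_of_natDegree_le hpdvd hne hle2).irreducible hpirr)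
  · rintro ⟨hgirr, hhirr⟩
    set h : K⟮β⟯[X] := f.map (algebraMap K K⟮β⟯) - C (AdjoinSimple.gen K β) with hh
    have hdeg : h.natDegree = f.natDegree := by rw [hh, natDegree_sub_C, natDegree_map]
    have hf0 : f.natDegree ≠ 0 := by
      intro e
      rw [e] at hdeg
      rw [eq_C_of_natDegree_eq_zero hdeg] at hhirr
      exact not_irreducible_C _ hhirr
    have hcomp0 : g.comp f ≠ 0 := fun h0 => by
      have := congrArg natDegree h0
      rw [natDegree_comp, natDegree_zero] at this
      exact absurd (Nat.mul_eq_zero.mp this) (by simp [hg, hf0])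
    have hcompnu : ¬ IsUnit (g.comp f) := fun hu => by
      have := natDegree_eq_zero_of_isUnit hu
      rw [natDegree_comp] at this
      exact absurd (Nat.mul_eq_zero.mp this) (by simp [hg, hf0])
    obtain ⟨p, hpirr, hpdvd⟩ := WfDvdMonoid.exists_irreducible_factor hcompnu hcomp0
    haveI := Fact.mk hpirr
    let Kx := AdjoinRoot p
    haveI : FiniteDimensional K Kx := (AdjoinRoot.powerBasis hpirr.ne_zero).finite
    set x : Kx := aeval (AdjoinRoot.root p) f with hx
    have hxg : aeval x g = 0 := by
      have : aeval (AdjoinRoot.root p) (g.comp f) = 0 :=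
        aeval_eq_zero_of_dvd_aeval_eq_zero hpdvd (AdjoinRoot.eval₂_root p)
      rwa [aeval_comp] at this
    have hxint : IsIntegral K x := IsIntegral.of_finite K x
    have hminx : minpoly K x = minpoly K β := by
      rw [← minpoly.eq_of_irreducible hgirr hxg, ← minpoly.eq_of_irreducible hgirr hβ]
    have hhx : Irreducible (f.map (algebraMap K K⟮x⟯) - C (AdjoinSimple.gen K x)) :=
      transfer_irred hβint hxint hminx.symm f hhirr
    set h' : K⟮x⟯[X] := f.map (algebraMap K K⟮x⟯) - C (AdjoinSimple.gen K x) with hh'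
    have hroot' : aeval (AdjoinRoot.root p) h' = 0 := by
      rw [hh', map_sub, aeval_C, aeval_map_algebraMap, AdjoinSimple.algebraMap_gen, ← hx,
        sub_self]
    have hminroot := minpoly.eq_of_irreducible hhx hroot'
    have key2 : finrank K⟮x⟯ Kx = f.natDegree := by
      trans natDegree (minpoly K⟮x⟯ (AdjoinRoot.root p))
      · have htop : K⟮x⟯⟮AdjoinRoot.root p⟯ = ⊤ := by
          apply restrictScalars_injective K
          rw [restrictScalars_top, adjoin_adjoin_left, Set.union_comm, ← adjoin_adjoin_left,
            adjoin_root_eq_top p, restrictScalars_adjoin]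
          simp
        rw [← finrank_top', ← htop, adjoin.finrank]
        exact IsIntegral.of_finite _ _
      · rw [← hminroot, natDegree_mul_C (inv_ne_zero (leadingCoeff_ne_zero.mpr hhx.ne_zero)),
          hh', natDegree_sub_C, natDegree_map]
    have key1 : finrank K K⟮x⟯ = g.natDegree := by
      rw [adjoin.finrank hxint, ← minpoly.eq_of_irreducible hgirr hxg,
        natDegree_mul_C (inv_ne_zero (leadingCoeff_ne_zero.mpr hg0))]
    have hfinKx : finrank K Kx = p.natDegree := by
      rw [(AdjoinRoot.powerBasis hpirr.ne_zero).finrank, AdjoinRoot.powerBasis_dim]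
    have hptot : p.natDegree = g.natDegree * f.natDegree := by
      rw [← hfinKx, ← key1, ← key2, Module.finrank_mul_finrank]
    have hle2 : (g.comp f).natDegree ≤ p.natDegree := by rw [hptot, natDegree_comp]
    exact ((associated_of_dvd_of_natDegree_le hpdvd hcomp0 hle2).irreducible hpirr)
end

section
/- Let q be an odd prime power, let g ∈ 𝔽_q[x] be monic and irreducible of even degree, and let f = (x - a)² - b ∈ 𝔽_q[x] with a, b ∈ 𝔽_q. Then g ∘ f is irreducible over 𝔽_q if and only if g(-b) is not a square in 𝔽_q. -/
/-! Put `h := g(X - b)`, so that `g ∘ f = h ∘ (X - a)²`. For a root `θ` of `h`, Capelli's lemma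
makes `h ∘ (X - a)²` irreducible as soon as `(X - a)² - θ` is irreducible over `𝔽_q(θ)`, i.e. as soon
as `θ` is not a square there; conversely a square root `t` of `θ` gives the root `a + t` of degree
at most `deg h`. In an extension of finite fields of odd characteristic an element is a square iff
its norm is, and the norm of `θ` is `(-1)^(deg h) h(0) = g(-b)` since the degree is even. -/

open Polynomial IntermediateField

universe u

theorem FiniteField.isSquare_iff_isSquare_norm {F K : Type*} [Field F] [Finite F] [Field K]
    [Finite K] [Algebra F K] (hF : ringChar F ≠ 2) (x : K) :
    IsSquare x ↔ IsSquare (Algebra.norm F x) := by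
  refine ⟨fun ⟨t, ht⟩ ↦ ⟨Algebra.norm F t, ht ▸ map_mul _ t t⟩, fun hN ↦ ?_⟩
  rcases eq_or_ne x 0 with rfl | hx
  · exact IsSquare.zero
  have := Fintype.ofFinite F
  have := Fintype.ofFinite K
  have hK : ringChar K ≠ 2 := by rwa [← Algebra.ringChar_eq F K]
  rw [FiniteField.isSquare_iff hF (Algebra.norm_ne_zero_iff.mpr hx)] at hN
  rw [FiniteField.isSquare_iff hK hx]
  set q := Fintype.card F
  set s := ∑ i ∈ Finset.range (Module.finrank F K), q ^ i
  -- the norm is `x ↦ x ^ s`, so Euler's criterion in `K` reduces to the one in `F`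
  have hcard : Fintype.card K / 2 = s * (q / 2) := by
    have hq := FiniteField.odd_card_of_char_ne_two hF
    have hQ := FiniteField.odd_card_of_char_ne_two hK
    have hgeom : s * (q - 1) = Fintype.card K - 1 := by
      have hq1 : 1 ≤ q := Fintype.one_lt_card.le
      rw [Module.card_eq_pow_finrank (K := F)]
      zify [hq1, Nat.one_le_pow _ _ (Fintype.card_pos (α := F))]
      push_cast [s]
      exact geom_sum_mul (q : ℤ) _
    rw [show q - 1 = 2 * (q / 2) by omega, mul_left_comm] at hgeom
    omega
  have hnorm := FiniteField.algebraMap_norm_eq_pow_sum F K x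
  rw [Nat.card_eq_fintype_card] at hnorm
  rw [hcard, pow_mul, ← hnorm, ← map_pow, hN, map_one]

theorem IntermediateField.AdjoinSimple.norm_gen {F E : Type*} [Field F] [Field E] [Algebra F E]
    {x : E} (hx : IsIntegral F x) :
    Algebra.norm F (AdjoinSimple.gen F x) =
      (-1) ^ (minpoly F x).natDegree * (minpoly F x).coeff 0 := by
  simpa [minpoly_gen] using
    Algebra.PowerBasis.norm_gen_eq_coeff_zero_minpoly (adjoin.powerBasis hx)

theorem Polynomial.irreducible_X_sub_C_sq_sub_C {K : Type*} [Field K] {a c : K}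
    (hc : ¬IsSquare c) : Irreducible ((X - C a) ^ 2 - C c) := by
  have hdeg : ((X - C a) ^ 2 - C c).natDegree = 2 := by compute_degree!
  refine irreducible_of_degree_le_three_of_not_isRoot (by simp [hdeg]) fun r hr ↦ hc ⟨r - a, ?_⟩
  simp only [IsRoot, eval_sub, eval_pow, eval_X, eval_C, sub_eq_zero] at hr
  rw [← hr, sq]

theorem Polynomial.natDegree_le_finrank_of_aeval_eq_zero {F K : Type*} [Field F] [Field K]
    [Algebra F K] [Module.Finite F K] {p : F[X]} (hp : Irreducible p) {x : K}
    (hx : aeval x p = 0) : p.natDegree ≤ Module.finrank F K := by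
  rw [← natDegree_mul_leadingCoeff_inv p hp.ne_zero, minpoly.eq_of_irreducible hp hx]
  exact minpoly.natDegree_le x

theorem IntermediateField.isSquare_adjoinSimple_gen_iff {F E : Type*} [Field F] [Finite F]
    [Field E] [Algebra F E] (hF : ringChar F ≠ 2) {x : E} (hx : IsIntegral F x)
    (hdeg : Even (minpoly F x).natDegree) :
    IsSquare (AdjoinSimple.gen F x) ↔ IsSquare ((minpoly F x).coeff 0) := by
  have := adjoin.finiteDimensional hx
  have := Module.finite_of_finite F (M := F⟮x⟯)
  rw [FiniteField.isSquare_iff_isSquare_norm hF, AdjoinSimple.norm_gen hx, hdeg.neg_one_pow,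
    one_mul]

theorem Polynomial.irreducible_comp_X_sub_C_sq_iff {F : Type u} [Field F] [Finite F]
    (hF : ringChar F ≠ 2) {h : F[X]} (hm : h.Monic) (hirr : Irreducible h)
    (hdeg : Even h.natDegree) (a : F) :
    Irreducible (h.comp ((X - C a) ^ 2)) ↔ ¬IsSquare (h.coeff 0) := by
  have hsq {E : Type u} [Field E] [Algebra F E] {x : E} (hx : minpoly F x = h) :
      IsSquare (AdjoinSimple.gen F x) ↔ IsSquare (h.coeff 0) := by
    have hint : IsIntegral F x := minpoly.ne_zero_iff.mp (hx ▸ hirr.ne_zero)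
    rw [isSquare_adjoinSimple_gen_iff hF hint (hx ▸ hdeg), hx]
  constructor
  · rintro hcomp hsq0
    have := Fact.mk hirr
    set x := AdjoinRoot.root h
    have hx : minpoly F x = h := by
      rw [AdjoinRoot.minpoly_root hirr.ne_zero, hm.leadingCoeff, inv_one, C_1, mul_one]
    have hint : IsIntegral F x := AdjoinRoot.isIntegral_root hirr.ne_zero
    have := adjoin.finiteDimensional hint
    obtain ⟨t, ht⟩ := (hsq hx).mpr hsq0
    -- `a + t` is a root of `h ∘ (X - a)²` of degree at most `deg h`
    have hroot : aeval (algebraMap F F⟮x⟯ a + t) (h.comp ((X - C a) ^ 2)) = 0 := by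
      rw [aeval_comp]
      simp [sq, ← ht, ← hx, aeval_gen_minpoly]
    have hle := natDegree_le_finrank_of_aeval_eq_zero hcomp hroot
    rw [adjoin.finrank hint, hx, natDegree_comp, natDegree_pow, natDegree_X_sub_C] at hle
    have := hirr.natDegree_pos
    omega
  · refine fun hns ↦ irreducible_comp hm ((monic_X_sub_C a).pow 2) hirr fun E _ _ x hx ↦ ?_
    simp only [Polynomial.map_pow, Polynomial.map_sub, map_X, map_C]
    exact irreducible_X_sub_C_sq_sub_C (by rwa [hsq hx])

/-- Let `𝔽_q` be a finite field of odd characteristic, `g` monic irreducible of even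
degree, and `f = (x-a)² - b`. Then `g ∘ f` is irreducible iff `g(-b)` is not a square. -/
theorem irred_comp_quadratic (F : Type*) [Field F] [Fintype F] (hchar : ringChar F ≠ 2)
    (g : F[X]) (hg : g.Monic) (hgirr : Irreducible g) (hdeg : Even g.natDegree)
    (a b : F) :
    Irreducible (g.comp ((X - C a) ^ 2 - C b)) ↔ ¬ IsSquare (g.eval (-b)) := by
  have hcomp : g.comp ((X - C a) ^ 2 - C b) = (taylor (-b) g).comp ((X - C a) ^ 2) := by
    rw [taylor_apply, comp_assoc, add_comp, X_comp, C_comp, C_neg, ← sub_eq_add_neg]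
  have hm : (taylor (-b) g).Monic := by rw [Monic, leadingCoeff_taylor]; exact hg
  have hirr : Irreducible (taylor (-b) g) := hgirr.map (taylorEquiv (-b))
  rw [hcomp, irreducible_comp_X_sub_C_sq_iff hchar hm hirr (by rwa [natDegree_taylor]) a,
    taylor_coeff_zero]
end

section
/- Let K be a field of characteristic ≠ 2 and let v', w' ∈ K[x] be monic polynomials of the same degree n ≥ 1. If a ≠ b in K and f, g ∈ K[x] are monic of degree 2 with f(v'(x+a)) = g(w'(x+b)), then v'(x+a) = w'(x+b) (as polynomials) and the constant terms of f and g coincide after translation; in particular if v'(x+a) ≠ w'(x+b) then no such f, g exist. -/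
open Polynomial

/-- Let `K` be a field of characteristic ≠ 2, `v', w'` monic of equal degree `n ≥ 1`,
`a ≠ b` in `K`, and `f = x² - j`, `g = x² - j'` monic quadratics. If
`f(v'(x+a)) = g(w'(x+b))` then `v'(x+a) = w'(x+b)` and `j = j'`. -/
theorem shifted_comp_cancel (K : Type*) [Field K] (h2 : (2 : K) ≠ 0)
    (v' w' : K[X]) (hmv : v'.Monic) (hmw : w'.Monic) (n : ℕ) (hn : 1 ≤ n)
    (hdv : v'.natDegree = n) (hdw : w'.natDegree = n) (a b : K) (hab : a ≠ b)
    (j j' : K)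
    (heq : (X ^ 2 - C j).comp (v'.comp (X + C a)) =
           (X ^ 2 - C j').comp (w'.comp (X + C b))) :
    v'.comp (X + C a) = w'.comp (X + C b) ∧ j = j' := by
  set V := v'.comp (X + C a) with hV
  set W := w'.comp (X + C b) with hW
  have hmV : V.Monic := hmv.comp_X_add_C a
  have hmW : W.Monic := hmw.comp_X_add_C b
  have hdV : V.natDegree = n := by
    simp [hV, natDegree_comp, hdv]
  have hdW : W.natDegree = n := by
    simp [hW, natDegree_comp, hdw]
  simp only [sub_comp, pow_comp, X_comp, C_comp] at heq
  -- heq : V ^ 2 - C j = W ^ 2 - C j'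
  have key : (V - W) * (V + W) = C j - C j' := by
    ring_nf
    ring_nf at heq
    linear_combination heq
  have hVW : V = W := by
    by_contra hne
    have h1 : V - W ≠ 0 := sub_ne_zero.mpr hne
    have hco : (V + W).coeff n = 2 := by
      have := hmV.coeff_natDegree
      have := hmW.coeff_natDegree
      rw [coeff_add]
      rw [hdV] at *
      rw [hdW] at *
      simp_all
      ring
    have h2' : V + W ≠ 0 := by
      intro h
      rw [h] at hco
      simp at hco
      exact h2 hco.symm
    have hdeg : ((V - W) * (V + W)).natDegree = (V - W).natDegree + (V + W).natDegree :=
      natDegree_mul h1 h2'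
    have hdeg2 : (V + W).natDegree = n := by
      apply le_antisymm
      · exact le_trans (natDegree_add_le _ _) (by simp [hdV, hdW])
      · exact le_natDegree_of_ne_zero (by rw [hco]; exact h2)
    have : ((V - W) * (V + W)).natDegree = 0 := by
      rw [key]
      exact natDegree_sub_C (p := C j) ▸ (by simp [natDegree_sub_C])
    omega
  refine ⟨hVW, ?_⟩
  rw [hVW] at heq
  have : C j = C j' := by linear_combination -heq
  exact C_injective this
end

section
/- Let L be a field and let f, g ∈ L[x] be monic polynomials with f = (x - a)² - b for some a, b ∈ L and g of degree n ≥ 1. Then disc(g ∘ f) = ± disc(g)² · 4^n · g(-b), i.e., disc(g ∘ f) equals disc(g)² · 4^n · g(-b) up to sign. -/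
/-!
Over an algebraic closure, the roots of `g ∘ f` are, for each root `s` of `g`, the two roots `r`
of `f = s`, and the chain rule gives `(g ∘ f)'(r) = g'(s) f'(r)`. For `f = (x - a)² - b` we have
`f'(r) = 2(r - a)`, and the product of these over the two roots of `(x - a)² - (b + s)` is
`4 · (a - r₁)(a - r₂) = -4(b + s)`. Hence `∏ (g ∘ f)'(r) = (∏ g'(s))² · ∏ 4(-b - s)`, and the last
product is `4ⁿ g(-b)`.
-/

open Polynomial

/-- For a polynomial `f` over a field `L`, the product `∏ f'(rᵢ)` over the roots `rᵢ`
of `f` in an algebraic closure of `L`.  For monic `f` of degree `n` this equals the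
discriminant of `f` up to the sign `(-1)^(n(n-1)/2)`. -/
noncomputable def discUpToSign {L : Type*} [Field L] (f : L[X]) : AlgebraicClosure L :=
  (((f.map (algebraMap L (AlgebraicClosure L))).roots).map
    fun r => ((f.map (algebraMap L (AlgebraicClosure L))).derivative).eval r).prod

section DerivativeRootsProd

variable {R : Type*} [CommRing R] [IsDomain R]

noncomputable def derivativeRootsProd (p : R[X]) : R :=
  (p.roots.map fun r => p.derivative.eval r).prod

theorem roots_comp_of_splits {G F : R[X]} (hG : G.Splits) (hGm : G.Monic)
    (hF : 0 < F.natDegree) : (G.comp F).roots = G.roots.bind fun s => (F - C s).roots := by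
  have hfactor : G.comp F = (G.roots.map fun s => F - C s).prod := by
    conv_lhs => rw [hG.eq_prod_roots_of_monic hGm]
    simp [multiset_prod_comp, Multiset.map_map]
  rw [hfactor, roots_multiset_prod, Multiset.bind_map]
  simp only [Multiset.mem_map, not_exists, not_and]
  intro s _ hs
  have := congrArg natDegree hs
  rw [natDegree_sub_C, natDegree_zero] at this
  omega

theorem derivativeRootsProd_comp {G F : R[X]} (hG : G.Splits) (hGm : G.Monic)
    (hF : 0 < F.natDegree) :
    derivativeRootsProd (G.comp F) = (G.roots.map fun s =>
      G.derivative.eval s ^ (F - C s).roots.card * derivativeRootsProd (F - C s)).prod := by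
  rw [derivativeRootsProd, roots_comp_of_splits hG hGm hF, Multiset.map_bind,
    Multiset.prod_bind]
  refine congrArg _ (Multiset.map_congr rfl fun s _ => ?_)
  have hchain : ∀ r ∈ (F - C s).roots,
      (G.comp F).derivative.eval r = G.derivative.eval s * (F - C s).derivative.eval r := by
    intro r hr
    have hFr : F.eval r = s := sub_eq_zero.mp (by simpa using isRoot_of_mem_roots hr)
    rw [derivative_comp, eval_mul, eval_comp, hFr, derivative_sub, derivative_C, sub_zero,
      mul_comm]
  rw [Multiset.map_congr rfl hchain, Multiset.prod_map_mul, Multiset.map_const',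
    Multiset.prod_replicate, derivativeRootsProd]

theorem monic_X_sub_C_sq_sub_C (a c : R) : ((X - C a) ^ 2 - C c).Monic :=
  ((monic_X_sub_C a).pow 2).sub_of_left <| degree_C_le.trans_lt <| by
    rw [degree_pow, degree_X_sub_C]; norm_num

theorem natDegree_X_sub_C_sq_sub_C (a c : R) : ((X - C a) ^ 2 - C c).natDegree = 2 := by
  rw [natDegree_sub_C, natDegree_pow, natDegree_X_sub_C]

theorem derivativeRootsProd_X_sub_C_sq_sub_C {a c : R} (h : ((X - C a) ^ 2 - C c).Splits) :
    derivativeRootsProd ((X - C a) ^ 2 - C c) = -(4 * c) := by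
  set F := (X - C a) ^ 2 - C c with hF
  have hderiv : ∀ r, F.derivative.eval r = -2 * (a - r) := by
    intro r
    simp only [hF, derivative_sub, derivative_sq, derivative_X, derivative_C, eval_sub, eval_mul,
      eval_X, eval_C, sub_zero, mul_one]
    ring
  calc derivativeRootsProd F = (F.roots.map fun r => -2 * (a - r)).prod := by
        simp only [derivativeRootsProd, hderiv]
    _ = (-2) ^ 2 * F.eval a := by
        rw [Multiset.prod_map_mul, Multiset.map_const', Multiset.prod_replicate,
          ← h.natDegree_eq_card_roots, natDegree_X_sub_C_sq_sub_C,
          h.eval_eq_prod_roots_of_monic (monic_X_sub_C_sq_sub_C a c)]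
    _ = -(4 * c) := by simp only [hF, eval_sub, eval_pow, eval_X, eval_C]; ring

end DerivativeRootsProd

theorem derivativeRootsProd_comp_X_sub_C_sq_sub_C {K : Type*} [Field K] [IsAlgClosed K]
    {G : K[X]} (hG : G.Monic) (a b : K) :
    derivativeRootsProd (G.comp ((X - C a) ^ 2 - C b)) =
      derivativeRootsProd G ^ 2 * 4 ^ G.natDegree * G.eval (-b) := by
  have hfiber : ∀ s, G.derivative.eval s ^ ((X - C a) ^ 2 - C b - C s).roots.card *
      derivativeRootsProd ((X - C a) ^ 2 - C b - C s) =
      G.derivative.eval s ^ 2 * (4 * (-b - s)) := by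
    intro s
    rw [sub_sub, ← C_add, ← (IsAlgClosed.splits _).natDegree_eq_card_roots,
      natDegree_X_sub_C_sq_sub_C, derivativeRootsProd_X_sub_C_sq_sub_C (IsAlgClosed.splits _)]
    ring
  rw [derivativeRootsProd_comp (IsAlgClosed.splits G) hG
      (by rw [natDegree_X_sub_C_sq_sub_C]; norm_num),
    Multiset.map_congr rfl fun s _ => hfiber s, Multiset.prod_map_mul, Multiset.prod_map_pow,
    Multiset.prod_map_mul, Multiset.map_const', Multiset.prod_replicate,
    ← (IsAlgClosed.splits G).natDegree_eq_card_roots,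
    ← (IsAlgClosed.splits G).eval_eq_prod_roots_of_monic hG, derivativeRootsProd, mul_assoc]

theorem discUpToSign_eq_derivativeRootsProd {L : Type*} [Field L] (f : L[X]) :
    discUpToSign f = derivativeRootsProd (f.map (algebraMap L (AlgebraicClosure L))) :=
  rfl

theorem disc_comp_quadratic_general (L : Type*) [Field L] (a b : L) (g : L[X]) (hg : g.Monic)
    (n : ℕ) (hgd : g.natDegree = n) :
    (discUpToSign (g.comp ((X - C a) ^ 2 - C b))) ^ 2 =
      ((discUpToSign g) ^ 2 * 4 ^ n *
        algebraMap L (AlgebraicClosure L) (g.eval (-b))) ^ 2 := by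
  set φ := algebraMap L (AlgebraicClosure L)
  have hmap : (g.comp ((X - C a) ^ 2 - C b)).map φ =
      (g.map φ).comp ((X - C (φ a)) ^ 2 - C (φ b)) := by
    simp [map_comp]
  rw [discUpToSign_eq_derivativeRootsProd, discUpToSign_eq_derivativeRootsProd, hmap,
    derivativeRootsProd_comp_X_sub_C_sq_sub_C (hg.map φ), natDegree_map, hgd, eval_map,
    ← map_neg, eval₂_at_apply]

/-- Let `L` be a field, `f = (x-a)² - b` and `g` monic of degree `n ≥ 1`.  Then
`disc(g ∘ f) = ± disc(g)² · 4ⁿ · g(-b)`; equivalently, squaring both sides (so that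
the signs disappear), `disc(g∘f)² = (disc(g)² · 4ⁿ · g(-b))²`. -/
theorem disc_comp_quadratic (L : Type*) [Field L] (a b : L) (g : L[X]) (hg : g.Monic)
    (n : ℕ) (hn : 1 ≤ n) (hgd : g.natDegree = n) :
    (discUpToSign (g.comp ((X - C a) ^ 2 - C b))) ^ 2 =
      ((discUpToSign g) ^ 2 * 4 ^ n *
        algebraMap L (AlgebraicClosure L) (g.eval (-b))) ^ 2 :=
  disc_comp_quadratic_general L a b g hg n hgd
end

section
/- Let q be an odd prime power and let S = {x² - b : b ∈ 𝔽_q} ⊂ 𝔽_q[x]. Then the monoid C_S of polynomials generated by S under composition (together with x) is free on S: any polynomial in C_S has a unique expression as a composition of elements of S. -/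
open Polynomial

lemma foldr_monic_natDegree (F : Type*) [Field F] (l : List F) :
    ((l.map fun b => (X : F[X]) ^ 2 - C b).foldr Polynomial.comp X).Monic ∧
    ((l.map fun b => (X : F[X]) ^ 2 - C b).foldr Polynomial.comp X).natDegree = 2 ^ l.length := by
  induction l with
  | nil => simp [monic_X]
  | cons b l ih =>
    obtain ⟨hm, hd⟩ := ih
    have hmb : ((X : F[X]) ^ 2 - C b).Monic := by
      have := monic_X_pow_sub_C (R := F) b (n := 2) (by norm_num)
      exact this
    constructor
    · simp only [List.map_cons, List.foldr_cons]
      exact hmb.comp hm (by rw [hd]; positivity)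
    · simp only [List.map_cons, List.foldr_cons, natDegree_comp, hd]
      rw [natDegree_X_pow_sub_C]
      simp [pow_succ, Nat.mul_comm]

/-- Let `𝔽_q` be a finite field of odd characteristic and `S = {x² - b : b ∈ 𝔽_q}`.
The compositional monoid generated by `S` is free on `S`: the map sending a word over
`S` (a list of elements `b ∈ 𝔽_q`) to the corresponding composition is injective. -/
theorem comp_monoid_free (F : Type*) [Field F] [Fintype F] (hchar : ringChar F ≠ 2) :
    Function.Injective
      (fun l : List F => (l.map fun b => (X : F[X]) ^ 2 - C b).foldr Polynomial.comp X) := by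
  intro l₁
  induction l₁ with
  | nil =>
    intro l₂ h
    simp only at h
    have h2 := (foldr_monic_natDegree F l₂).2
    rw [← h] at h2
    simp at h2
    have : l₂.length = 0 := Nat.pow_right_injective (le_refl 2) (by simpa using h2.symm)
    exact (List.eq_nil_of_length_eq_zero this).symm
  | cons b t ih =>
    intro l₂ h
    simp only at h
    cases l₂ with
    | nil =>
      exfalso
      have h2 := (foldr_monic_natDegree F (b :: t)).2
      rw [h] at h2
      simp at h2
      omega
    | cons b' t' =>
      set P := ((t.map fun b => (X : F[X]) ^ 2 - C b).foldr Polynomial.comp X) with hP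
      set Q := ((t'.map fun b => (X : F[X]) ^ 2 - C b).foldr Polynomial.comp X) with hQ
      have hPm := (foldr_monic_natDegree F t).1
      have hQm := (foldr_monic_natDegree F t').1
      have hPd := (foldr_monic_natDegree F t).2
      have hQd := (foldr_monic_natDegree F t').2
      have hlen : t.length = t'.length := by
        have h1 := (foldr_monic_natDegree F (b :: t)).2
        have h2 := (foldr_monic_natDegree F (b' :: t')).2
        rw [h] at h1
        have := h1.symm.trans h2
        simpa using Nat.pow_right_injective (le_refl 2) this
      have h' : P ^ 2 - C b = Q ^ 2 - C b' := by
        simpa [sub_comp, pow_comp, X_comp, C_comp] using h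
      have hdeq : P.natDegree = Q.natDegree := by rw [hPd, hQd, hlen]
      have hPQ : P = Q := by
        by_contra hne
        have hsub : P - Q ≠ 0 := sub_ne_zero.mpr hne
        have htwo : (2 : F) ≠ 0 := Ring.two_ne_zero hchar
        have hcoeff : (P + Q).coeff P.natDegree = 2 := by
          rw [coeff_add, hPm.coeff_natDegree, hdeq, hQm.coeff_natDegree]
          norm_num
        have hadd : P + Q ≠ 0 := fun h0 => htwo (by rw [← hcoeff, h0, coeff_zero])
        have hle : P.natDegree ≤ (P + Q).natDegree :=
          le_natDegree_of_ne_zero (by rw [hcoeff]; exact htwo)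
        have hone : 1 ≤ P.natDegree := by rw [hPd]; exact Nat.one_le_two_pow
        have hprod : (P - Q) * (P + Q) = C (b - b') := by
          rw [map_sub]
          linear_combination h'
        have h0 : ((P - Q) * (P + Q)).natDegree = 0 := by rw [hprod]; exact natDegree_C _
        rw [natDegree_mul hsub hadd] at h0
        omega
      have hb : b = b' := by
        have hC : C b = C b' := by
          have h2 := h'
          rw [hPQ] at h2
          linear_combination -h2
        exact C_injective hC
      have ht : t = t' := ih (by simpa using hPQ)
      rw [hb, ht]
end

section
/- Let K be a field of characteristic ≠ 2 and let c ∈ K. Let f = x² - b and g = x² - b' with b, b' ∈ K, and let u, v ∈ K[x] be monic of the same degree n ≥ 1. If f(u) = g(v) then u = v and b = b'. -/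
open Polynomial

/-- Let `K` be a field of characteristic ≠ 2, `u, v` monic of the same degree `n ≥ 1`,
and `f = x² - b`, `g = x² - b'`. If `f(u) = g(v)` then `u = v` and `b = b'`. -/
theorem comp_quadratic_cancel (K : Type*) [Field K] (h2 : (2 : K) ≠ 0)
    (u v : K[X]) (hmu : u.Monic) (hmv : v.Monic) (n : ℕ) (hn : 1 ≤ n)
    (hdu : u.natDegree = n) (hdv : v.natDegree = n) (b b' : K)
    (heq : (X ^ 2 - C b).comp u = (X ^ 2 - C b').comp v) :
    u = v ∧ b = b' := by
  simp only [sub_comp, pow_comp, X_comp, C_comp] at heq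
  have key : (u - v) * (u + v) = C b - C b' := by linear_combination heq
  have hsum : (u + v).natDegree = n := by
    have hc : (u + v).coeff n = 2 := by
      have := hmu.coeff_natDegree
      have := hmv.coeff_natDegree
      rw [hdu] at *
      rw [hdv] at *
      simp_all [coeff_add]
      ring
    have hne : u + v ≠ 0 := fun h => by simp [h] at hc; exact h2 hc.symm
    apply le_antisymm
    · exact natDegree_add_le_iff_left u v (le_of_eq hdv) |>.mpr (le_of_eq hdu) |>.trans_eq rfl
    · exact le_natDegree_of_ne_zero (by rw [hc]; exact h2)
  have huv : u - v = 0 := by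
    by_contra h
    have hprod : ((u - v) * (u + v)).natDegree = (u - v).natDegree + n := by
      rw [natDegree_mul h (fun hs => by simp [hs] at hsum; omega), hsum]
    rw [key] at hprod
    have : (C b - C b').natDegree = 0 := by
      rw [← C_sub]; exact natDegree_C _
    omega
  have huveq : u = v := sub_eq_zero.mp huv
  refine ⟨huveq, ?_⟩
  have : C b = C b' := by
    have := key
    rw [huv, zero_mul] at this
    have := this.symm
    rwa [sub_eq_zero] at this
  exact C_injective this
end

section
/- Let q be an odd prime power and S a finite set of monic degree-two polynomials in 𝔽_q[x], each written uniquely as f = (x - a_f)² - b_f. If the map f ↦ b_f is injective on S (i.e., |D_S| = |S|), then the compositional monoid C_S generated by S is free: the canonical surjection from the free monoid S* to C_S is an isomorphism. -/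
/-!
Write `d f = (coeff 1 f)² - 4 coeff 0 f`, so that completing the square gives
`4 (f ∘ P) = (2P + coeff 1 f)² - d f`. If `f ∘ P = g ∘ Q` with `P`, `Q` monic of the same
positive degree, then `(2P + coeff 1 f)² - (2Q + coeff 1 g)²` is constant while the sum of the
two bases has leading coefficient `4 ≠ 0`; hence the bases agree, so `d f = d g`, so `f = g`, and
then `P = Q`. Comparing degrees, two words with the same composition have the same length, and
peeling off the outermost letter inductively shows they are equal.
-/

open Polynomial

namespace Polynomial

lemma isMonicOfDegree_foldr_comp {R : Type*} [CommSemiring R] [Nontrivial R] {l : List R[X]}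
    (hl : ∀ f ∈ l, IsMonicOfDegree f 2) : IsMonicOfDegree (l.foldr comp X) (2 ^ l.length) := by
  induction l with
  | nil => exact isMonicOfDegree_X R
  | cons f l ih =>
    rw [List.foldr_cons, List.length_cons, pow_succ']
    exact (hl f List.mem_cons_self).comp (by positivity)
      (ih fun g hg => hl g (List.mem_cons_of_mem f hg))

lemma four_mul_comp_eq_sq_sub_C {R : Type*} [CommRing R] [Nontrivial R] {f : R[X]}
    (hf : IsMonicOfDegree f 2) (P : R[X]) :
    4 * f.comp P = (2 * P + C (f.coeff 1)) ^ 2 - C (f.coeff 1 ^ 2 - 4 * f.coeff 0) := by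
  obtain ⟨a, b, rfl⟩ := isMonicOfDegree_two_iff.1 hf
  have ha : (X ^ 2 + C a * X + C b).coeff 1 = a := by simp [coeff_C]
  have hb : (X ^ 2 + C a * X + C b).coeff 0 = b := by simp
  rw [ha, hb]
  simp only [add_comp, mul_comp, pow_comp, X_comp, C_comp, map_sub, map_mul, map_pow, map_ofNat]
  ring

lemma eq_of_sq_sub_sq_eq_C {R : Type*} [CommRing R] [IsDomain R] {A B : R[X]} {k : R}
    (h : A ^ 2 - B ^ 2 = C k) (hAB : (A + B).natDegree ≠ 0) : A = B := by
  by_contra hne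
  have hAB0 : A + B ≠ 0 := by rintro h0; simp [h0] at hAB
  have := natDegree_mul hAB0 (sub_ne_zero.2 hne)
  rw [← sq_sub_sq, h, natDegree_C] at this
  omega

lemma eq_and_eq_of_comp_eq {R : Type*} [CommRing R] [IsDomain R] (h2 : (2 : R) ≠ 0)
    {f g P Q : R[X]} {n : ℕ} (hf : IsMonicOfDegree f 2) (hg : IsMonicOfDegree g 2)
    (hP : IsMonicOfDegree P n) (hQ : IsMonicOfDegree Q n) (hn : n ≠ 0)
    (hfg : f.coeff 1 ^ 2 - 4 * f.coeff 0 = g.coeff 1 ^ 2 - 4 * g.coeff 0 → f = g)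
    (h : f.comp P = g.comp Q) : f = g ∧ P = Q := by
  set A := 2 * P + C (f.coeff 1)
  set B := 2 * Q + C (g.coeff 1)
  have hA := four_mul_comp_eq_sq_sub_C hf P
  have hB := four_mul_comp_eq_sq_sub_C hg Q
  have hsq : A ^ 2 - B ^ 2 =
      C ((f.coeff 1 ^ 2 - 4 * f.coeff 0) - (g.coeff 1 ^ 2 - 4 * g.coeff 0)) := by
    rw [map_sub]; linear_combination 4 * h - hA + hB
  have hdeg : (A + B).natDegree ≠ 0 := by
    have hPn : P.coeff n = 1 := hP.natDegree_eq ▸ hP.monic.coeff_natDegree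
    have hQn : Q.coeff n = 1 := hQ.natDegree_eq ▸ hQ.monic.coeff_natDegree
    have hcoeff : (A + B).coeff n = 2 * 2 := by
      simp only [A, B, coeff_add, coeff_ofNat_mul, coeff_C, hn, hPn, hQn, if_false]
      ring
    have := le_natDegree_of_ne_zero (hcoeff ▸ mul_ne_zero h2 h2)
    omega
  have hAB : A = B := eq_of_sq_sub_sq_eq_C hsq hdeg
  obtain rfl : f = g := hfg (C_inj.1 (by linear_combination hA - hB - 4 * h + (A + B) * hAB))
  have h2X : (2 : R[X]) ≠ 0 := by rw [← map_ofNat C 2]; exact C_ne_zero.2 h2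
  exact ⟨rfl, mul_left_cancel₀ h2X (add_right_cancel hAB)⟩

theorem injOn_foldr_comp {R : Type*} [CommRing R] [IsDomain R] (h2 : (2 : R) ≠ 0)
    {T : Set R[X]} (hT : ∀ f ∈ T, IsMonicOfDegree f 2)
    (hinj : Set.InjOn (fun f : R[X] => f.coeff 1 ^ 2 - 4 * f.coeff 0) T) :
    Set.InjOn (fun l : List R[X] => l.foldr comp X) {l | ∀ f ∈ l, f ∈ T} := by
  intro l₁ hl₁ l₂ hl₂ h
  have hlen : l₁.length = l₂.length := Nat.pow_right_injective le_rfl <| by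
    dsimp only
    rw [← (isMonicOfDegree_foldr_comp fun f hf => hT f (hl₁ f hf)).natDegree_eq,
      ← (isMonicOfDegree_foldr_comp fun f hf => hT f (hl₂ f hf)).natDegree_eq]
    exact congrArg natDegree h
  induction l₁ generalizing l₂ with
  | nil => exact (List.length_eq_zero_iff.1 hlen.symm).symm
  | cons f l₁ ih =>
    obtain _ | ⟨g, l₂⟩ := l₂
    · simp at hlen
    simp only [List.length_cons, add_left_inj, List.mem_cons, forall_eq_or_imp,
      Set.mem_ofPred_eq] at hlen hl₁ hl₂
    have hP := isMonicOfDegree_foldr_comp fun f hf => hT f (hl₁.2 f hf)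
    have hQ := isMonicOfDegree_foldr_comp fun f hf => hT f (hl₂.2 f hf)
    obtain ⟨rfl, hl⟩ := eq_and_eq_of_comp_eq h2 (hT f hl₁.1) (hT g hl₂.1) hP (hlen ▸ hQ)
      (by positivity) (hinj hl₁.1 hl₂.1) h
    rw [ih hl₁.2 hl₂.2 hl hlen]

end Polynomial

theorem comp_monoid_free_of_distinguished_injective_general (F : Type*) [Field F]
    (hchar : ringChar F ≠ 2) (S : Finset F[X])
    (hmonic : ∀ f ∈ S, f.Monic) (hdeg : ∀ f ∈ S, f.natDegree = 2)
    (hinj : ∀ f ∈ S, ∀ g ∈ S,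
      f.coeff 1 ^ 2 - 4 * f.coeff 0 = g.coeff 1 ^ 2 - 4 * g.coeff 0 → f = g) :
    Function.Injective
      (fun l : List {f // f ∈ S} => (l.map (fun f => (f : F[X]))).foldr Polynomial.comp X) := by
  have hT : ∀ f ∈ (S : Set F[X]), IsMonicOfDegree f 2 :=
    fun f hf => ⟨hdeg f hf, hmonic f hf⟩
  intro l₁ l₂ h
  refine List.map_injective_iff.2 Subtype.val_injective <|
    injOn_foldr_comp (Ring.two_ne_zero hchar) hT (fun f hf g hg => hinj f hf g hg)
      (by simp +contextual) (by simp +contextual) ?_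
  simpa using h

/-- Let `S` be a finite set of monic degree-two polynomials over a finite field of odd
characteristic, each written uniquely as `f = (x - a_f)² - b_f`.  If the map `f ↦ b_f`
is injective on `S` (here expressed via `4 b_f = (coeff 1 f)² - 4 (coeff 0 f)`), then
the compositional monoid generated by `S` is free: the canonical map from words over
`S` to compositions is injective. -/
theorem comp_monoid_free_of_distinguished_injective (F : Type*) [Field F] [Fintype F]
    (hchar : ringChar F ≠ 2) (S : Finset F[X])
    (hmonic : ∀ f ∈ S, f.Monic) (hdeg : ∀ f ∈ S, f.natDegree = 2)
    (hinj : ∀ f ∈ S, ∀ g ∈ S,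
      f.coeff 1 ^ 2 - 4 * f.coeff 0 = g.coeff 1 ^ 2 - 4 * g.coeff 0 → f = g) :
    Function.Injective
      (fun l : List {f // f ∈ S} => (l.map (fun f => (f : F[X]))).foldr Polynomial.comp X) :=
  comp_monoid_free_of_distinguished_injective_general F hchar S hmonic hdeg hinj
end
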